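/- Let α>0 and γ≥0. Assume that F belongs to the exponential class ℒ(γ), that Ḡ(x)>0 for all x≥0, that e^{λ₁x^α}·F̄(x)→∞ as x→∞ for some λ₁>0 and e^{λ₂x^α}·F̄(x)→0 as x→∞ for some λ₂>0, and that e^{λ₃x^α}·Ḡ(x)→0 as x→∞ for some λ₃>0. Then the product convolution H belongs to the long-tailed class ℒ. -/

import Mathlib

open MeasureTheory ProbabilityTheory Filter Topology Asymptotics Set
open scoped ENNReal

noncomputable section

/-- The tail `P(X > x)` of a random variable `X` (as a real number). -/
def rvTail {Ω : Type*} [MeasurableSpace Ω] (μ : Measure Ω) (X : Ω → ℝ) (x : ℝ) : ℝ :=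
  (μ {ω | x < X ω}).toReal

/-- The tail `V̄(x) = V((x,∞))` of a distribution (probability measure) on `ℝ`. -/
def mTail (V : Measure ℝ) (x : ℝ) : ℝ := (V (Ioi x)).toReal

/-- The long-tailed class `ℒ`, described via the tail function:
`T̄(x) > 0` for all `x` and `T(x - t) ∼ T(x)` for each `t > 0`. -/
def IsLongTail (T : ℝ → ℝ) : Prop :=
  (∀ x, 0 < T x) ∧ ∀ t > 0, Tendsto (fun x => T (x - t) / T x) atTop (𝓝 1)

/-- The exponential class `ℒ(γ)`, described via the tail function:
`T(x) > 0` for all `x` and `T(x - t) ∼ e^{γ t} T(x)` for each real `t`. -/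
def IsLgamma (γ : ℝ) (T : ℝ → ℝ) : Prop :=
  (∀ x, 0 < T x) ∧ ∀ t : ℝ, Tendsto (fun x => T (x - t) / T x) atTop (𝓝 (Real.exp (γ * t)))

/-- The generalized long-tailed class `𝒪ℒ`, described via the tail function:
`T(x) > 0` for all `x` and `limsup_{x→∞} T(x - t)/T(x) < ∞` for each `t > 0`. -/
def IsOL (T : ℝ → ℝ) : Prop :=
  (∀ x, 0 < T x) ∧ ∀ t > 0, IsBoundedUnder (· ≤ ·) atTop (fun x => T (x - t) / T x)

/-- `C^*(T, t) = limsup_{x→∞} T(x-t)/T(x)`. -/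
def Cstar (T : ℝ → ℝ) (t : ℝ) : ℝ := Filter.limsup (fun x => T (x - t) / T x) atTop

/-- `C_*(T, t) = liminf_{x→∞} T(x-t)/T(x)`. -/
def Cflat (T : ℝ → ℝ) (t : ℝ) : ℝ := Filter.liminf (fun x => T (x - t) / T x) atTop

section Aux

variable {Ω : Type*} [MeasurableSpace Ω] {μ : Measure Ω} [IsProbabilityMeasure μ]
  {X Y : Ω → ℝ}

lemma rvTail_anti (μ : Measure Ω) [IsProbabilityMeasure μ] (X : Ω → ℝ) :
    Antitone (rvTail μ X) := fun a b hab =>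
  ENNReal.toReal_mono (measure_ne_top μ _)
    (measure_mono (fun _ h => lt_of_le_of_lt hab h))

lemma rvTail_eq_map (hXm : Measurable X) (x : ℝ) :
    rvTail μ X x = ((μ.map X) (Ioi x)).toReal := by
  rw [rvTail, Measure.map_apply hXm measurableSet_Ioi]
  rfl

lemma ennreal_le_ofReal_mul {a b : ℝ≥0∞} (ha : a ≠ ⊤) (hb : b ≠ ⊤) {K : ℝ} (hK : 0 ≤ K)
    (h : a.toReal ≤ K * b.toReal) : a ≤ ENNReal.ofReal K * b := by
  rw [← ENNReal.ofReal_toReal ha, ← ENNReal.ofReal_toReal hb, ← ENNReal.ofReal_mul hK]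
  exact ENNReal.ofReal_le_ofReal h

/-- Fubini slice lemma for the product. -/
lemma prod_slice (hXm : Measurable X) (hYm : Measurable Y)
    (hindep : IndepFun X Y μ) (a : ℝ) (S : Set ℝ) (hS : MeasurableSet S)
    (hSpos : ∀ y ∈ S, 0 < y) :
    μ {ω | a < X ω * Y ω ∧ Y ω ∈ S}
      = ∫⁻ y in S, (μ.map X) (Ioi (a / y)) ∂(μ.map Y) := by
  have hmap : μ.map (fun ω => (Y ω, X ω)) = (μ.map Y).prod (μ.map X) :=
    (indepFun_iff_map_prod_eq_prod_map_map hYm.aemeasurable hXm.aemeasurable).mp hindep.symm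
  have hT : MeasurableSet {p : ℝ × ℝ | a < p.2 * p.1 ∧ p.1 ∈ S} :=
    (measurableSet_lt measurable_const (measurable_snd.mul measurable_fst)).inter
      (hS.preimage measurable_fst)
  have h1 : {ω | a < X ω * Y ω ∧ Y ω ∈ S}
      = (fun ω => (Y ω, X ω)) ⁻¹' {p : ℝ × ℝ | a < p.2 * p.1 ∧ p.1 ∈ S} := rfl
  rw [h1, ← Measure.map_apply (hYm.prodMk hXm) hT, hmap, Measure.prod_apply hT,
    ← lintegral_indicator hS]
  congr 1
  funext y
  by_cases hy : y ∈ S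
  · rw [Set.indicator_of_mem hy]
    congr 1
    ext x'
    simp only [mem_preimage, mem_setOf_eq, mem_Ioi, hy, and_true]
    exact (div_lt_iff₀ (hSpos y hy)).symm
  · rw [Set.indicator_of_notMem hy]
    convert measure_empty
    · ext x'; simp [hy]
    · infer_instance

lemma tail_prod_pos (hindep : IndepFun X Y μ)
    (hFpos : ∀ u, 0 < rvTail μ X u) (hGpos : ∀ u ≥ (0:ℝ), 0 < rvTail μ Y u) (x : ℝ) :
    0 < rvTail μ (fun ω => X ω * Y ω) x := by
  set a := max x 1 with ha
  have ha1 : (1:ℝ) ≤ a := le_max_right _ _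
  have hsub : (X ⁻¹' Ioi a) ∩ (Y ⁻¹' Ioi a) ⊆ {ω | x < X ω * Y ω} := by
    rintro ω ⟨h1, h2⟩
    simp only [mem_preimage, mem_Ioi] at h1 h2
    have hx : x ≤ a := le_max_left _ _
    simp only [mem_setOf_eq]
    nlinarith
  have hmul := hindep.measure_inter_preimage_eq_mul _ _
    (measurableSet_Ioi (a := a)) (measurableSet_Ioi (a := a))
  have hX0 : μ (X ⁻¹' Ioi a) ≠ 0 := by
    intro h
    have h2 := hFpos a
    rw [rvTail, show {ω | a < X ω} = X ⁻¹' Ioi a from rfl, h] at h2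
    simp at h2
  have hY0 : μ (Y ⁻¹' Ioi a) ≠ 0 := by
    intro h
    have h2 := hGpos a (le_trans zero_le_one ha1)
    rw [rvTail, show {ω | a < Y ω} = Y ⁻¹' Ioi a from rfl, h] at h2
    simp at h2
  have hle : μ (X ⁻¹' Ioi a) * μ (Y ⁻¹' Ioi a) ≤ μ {ω | x < X ω * Y ω} := by
    rw [← hmul]; exact measure_mono hsub
  rw [rvTail]
  exact ENNReal.toReal_pos
    (fun h => mul_ne_zero hX0 hY0 (le_antisymm (h ▸ hle) zero_le))
    (measure_ne_top μ _)

lemma tail_prod_lower (hindep : IndepFun X Y μ) {c x : ℝ} (hc : 0 < c) (hx : 0 ≤ x) :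
    rvTail μ X (x / c) * rvTail μ Y c ≤ rvTail μ (fun ω => X ω * Y ω) x := by
  have hsub : (X ⁻¹' Ioi (x / c)) ∩ (Y ⁻¹' Ioi c) ⊆ {ω | x < X ω * Y ω} := by
    rintro ω ⟨h1, h2⟩
    simp only [mem_preimage, mem_Ioi] at h1 h2
    simp only [mem_setOf_eq]
    have hxc : 0 ≤ x / c := div_nonneg hx hc.le
    have hX : 0 < X ω := lt_of_le_of_lt hxc h1
    calc x < X ω * c := (div_lt_iff₀ hc).mp h1
    _ < X ω * Y ω := mul_lt_mul_of_pos_left h2 hX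
  have hmul := hindep.measure_inter_preimage_eq_mul _ _
    (measurableSet_Ioi (a := x / c)) (measurableSet_Ioi (a := c))
  rw [rvTail, rvTail, rvTail, ← ENNReal.toReal_mul,
    show {ω | x / c < X ω} = X ⁻¹' Ioi (x / c) from rfl,
    show {ω | c < Y ω} = Y ⁻¹' Ioi c from rfl, ← hmul]
  exact ENNReal.toReal_mono (measure_ne_top μ _) (measure_mono hsub)

end Aux

set_option maxHeartbeats 2000000 in
/-- under the exponential-order conditions, if `F ∈ ℒ(γ)` for some `γ ≥ 0`,
then the product convolution `H` is long-tailed. -/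
theorem stmt_4 {Ω : Type*} [MeasurableSpace Ω] (μ : Measure Ω) [IsProbabilityMeasure μ]
    (X Y : Ω → ℝ) (hXm : Measurable X) (hYm : Measurable Y)
    (hXnn : ∀ ω, 0 ≤ X ω) (hYnn : ∀ ω, 0 ≤ Y ω)
    (hindep : IndepFun X Y μ)
    (α γ : ℝ) (hα : 0 < α) (hγ : 0 ≤ γ)
    (hF : IsLgamma γ (rvTail μ X))
    (hGpos : ∀ x ≥ (0:ℝ), 0 < rvTail μ Y x)
    (h1 : ∃ l₁ > (0:ℝ), Tendsto (fun x => Real.exp (l₁ * x ^ α) * rvTail μ X x) atTop atTop)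
    (h2 : ∃ l₂ > (0:ℝ), Tendsto (fun x => Real.exp (l₂ * x ^ α) * rvTail μ X x) atTop (𝓝 0))
    (h3 : ∃ l₃ > (0:ℝ), Tendsto (fun x => Real.exp (l₃ * x ^ α) * rvTail μ Y x) atTop (𝓝 0)) :
    IsLongTail (rvTail μ (fun ω => X ω * Y ω)) := by
  haveI : IsProbabilityMeasure (μ.map X) := Measure.isProbabilityMeasure_map hXm.aemeasurable
  haveI : IsProbabilityMeasure (μ.map Y) := Measure.isProbabilityMeasure_map hYm.aemeasurable
  obtain ⟨l₁, hl₁, hT1⟩ := h1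
  obtain ⟨l₂, hl₂, hT2⟩ := h2
  obtain ⟨l₃, hl₃, hT3⟩ := h3
  have hFpos := hF.1
  have hHpos : ∀ x, 0 < rvTail μ (fun ω => X ω * Y ω) x :=
    tail_prod_pos hindep hFpos hGpos
  constructor
  · exact hHpos
  intro t ht
  rw [Metric.tendsto_nhds]
  intro ε₀ hε₀
  set ε := min ε₀ 1 with hεdef
  have hε : 0 < ε := lt_min hε₀ one_pos
  have hε1 : ε ≤ 1 := min_le_right _ _
  have hεε : ε ≤ ε₀ := min_le_left _ _
  -- choose b large so that exp(γ t / b) ≤ 1 + ε/8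
  set δ := Real.log (1 + ε / 8) with hδdef
  have hδ : 0 < δ := Real.log_pos (by linarith)
  set b := max 1 (γ * t / δ) with hbdef
  have hb1 : (1:ℝ) ≤ b := le_max_left _ _
  have hb0 : (0:ℝ) < b := lt_of_lt_of_le one_pos hb1
  set s := t / b with hsdef
  have hs0 : 0 < s := div_pos ht hb0
  have hexp : Real.exp (γ * s) ≤ 1 + ε / 8 := by
    have h2 : γ * t / δ ≤ b := le_max_right _ _
    have h3 : γ * t ≤ b * δ := (div_le_iff₀ hδ).mp h2
    have h4 : γ * s ≤ δ := by
      rw [hsdef, show γ * (t / b) = γ * t / b from (mul_div_assoc γ t b).symm,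
        div_le_iff₀ hb0]
      linarith
    calc Real.exp (γ * s) ≤ Real.exp δ := Real.exp_le_exp.mpr h4
    _ = 1 + ε / 8 := Real.exp_log (by linarith)
  -- the constant K and the uniformity threshold x₀
  set K := (1 + ε / 8) * (1 + ε / 8) with hKdef
  have hKnn : 0 ≤ K := by nlinarith
  have hKle : K ≤ 1 + ε / 2 := by nlinarith
  have hev : ∀ᶠ u in atTop, rvTail μ X (u - s) / rvTail μ X u < K :=
    (hF.2 s).eventually_lt_const (by nlinarith [hexp, Real.exp_pos (γ * s)])
  obtain ⟨x₀', hx₀'⟩ := eventually_atTop.mp hev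
  set x₀ := max x₀' 1 with hx₀def
  have hx₀1 : (1:ℝ) ≤ x₀ := le_max_right _ _
  have hx₀0 : (0:ℝ) < x₀ := lt_of_lt_of_le one_pos hx₀1
  have hK : ∀ u ≥ x₀, rvTail μ X (u - s) ≤ K * rvTail μ X u := fun u hu =>
    le_of_lt ((div_lt_iff₀ (hFpos u)).mp (hx₀' u (le_trans (le_max_left _ _) hu)))
  -- choose c
  set A₁ := l₂ / (2 * b) ^ α with hA₁def
  set A₂ := l₃ / x₀ ^ α with hA₂def
  have hA₁ : 0 < A₁ := div_pos hl₂ (Real.rpow_pos_of_pos (by linarith) α)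
  have hA₂ : 0 < A₂ := div_pos hl₃ (Real.rpow_pos_of_pos hx₀0 α)
  have hctend : Tendsto (fun c : ℝ => l₁ / c ^ α) atTop (𝓝 0) :=
    tendsto_const_nhds.div_atTop (tendsto_rpow_atTop hα)
  obtain ⟨c, hcM, hc1⟩ :=
    ((hctend.eventually_lt_const (lt_min hA₁ hA₂)).and (eventually_ge_atTop (1:ℝ))).exists
  set D := l₁ / c ^ α with hDdef
  have hc0 : (0:ℝ) < c := lt_of_lt_of_le one_pos hc1
  have hDA₁ : D < A₁ := lt_of_lt_of_le hcM (min_le_left _ _)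
  have hDA₂ : D < A₂ := lt_of_lt_of_le hcM (min_le_right _ _)
  -- eventual tail bounds
  have e1 : ∀ᶠ u in atTop, Real.exp (-(l₁ * u ^ α)) ≤ rvTail μ X u := by
    filter_upwards [hT1.eventually_ge_atTop 1] with u hu
    rw [Real.exp_neg, inv_eq_one_div, div_le_iff₀ (Real.exp_pos _), mul_comm]
    exact hu
  have e2 : ∀ᶠ u in atTop, rvTail μ X u ≤ Real.exp (-(l₂ * u ^ α)) := by
    filter_upwards [hT2.eventually_lt_const one_pos] with u hu
    rw [Real.exp_neg, inv_eq_one_div, le_div_iff₀ (Real.exp_pos _), mul_comm]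
    exact hu.le
  have e3 : ∀ᶠ u in atTop, rvTail μ Y u ≤ Real.exp (-(l₃ * u ^ α)) := by
    filter_upwards [hT3.eventually_lt_const one_pos] with u hu
    rw [Real.exp_neg, inv_eq_one_div, le_div_iff₀ (Real.exp_pos _), mul_comm]
    exact hu.le
  obtain ⟨u₁, hu₁⟩ := eventually_atTop.mp e1
  obtain ⟨u₂, hu₂⟩ := eventually_atTop.mp e2
  obtain ⟨u₃, hu₃⟩ := eventually_atTop.mp e3
  have hGc : 0 < rvTail μ Y c := hGpos c hc0.le
  -- lower bound for H
  have hlow : ∀ᶠ x in atTop, Real.exp (-(D * x ^ α)) * rvTail μ Y c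
      ≤ rvTail μ (fun ω => X ω * Y ω) x := by
    filter_upwards [eventually_ge_atTop (max (c * u₁) 0)] with x hx
    have hx0 : (0:ℝ) ≤ x := le_trans (le_max_right _ _) hx
    have hxc : u₁ ≤ x / c := by
      rw [le_div_iff₀ hc0]
      have := le_trans (le_max_left _ _) hx
      linarith
    have hF1 : Real.exp (-(l₁ * (x / c) ^ α)) ≤ rvTail μ X (x / c) := hu₁ _ hxc
    have hrw : l₁ * (x / c) ^ α = D * x ^ α := by
      rw [Real.div_rpow hx0 hc0.le, hDdef, div_mul_eq_mul_div, mul_div_assoc]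
    calc Real.exp (-(D * x ^ α)) * rvTail μ Y c
        ≤ rvTail μ X (x / c) * rvTail μ Y c := by
          apply mul_le_mul_of_nonneg_right _ hGc.le
          rw [← hrw]; exact hF1
    _ ≤ _ := tail_prod_lower hindep hc0 hx0
  -- smallness of the two error terms
  have hsmall : ∀ A : ℝ, D < A →
      Tendsto (fun x => Real.exp ((D - A) * x ^ α)) atTop (𝓝 0) := fun A hA =>
    Real.tendsto_exp_atBot.comp
      ((tendsto_rpow_atTop hα).const_mul_atTop_of_neg (by linarith))
  have hE1 : ∀ᶠ x in atTop, rvTail μ X ((x - t) / b)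
      ≤ ε / 8 * (Real.exp (-(D * x ^ α)) * rvTail μ Y c) := by
    filter_upwards [(hsmall A₁ hDA₁).eventually_lt_const
        (by positivity : (0:ℝ) < ε / 8 * rvTail μ Y c),
      eventually_ge_atTop (max (2 * t) (max 0 (b * u₂ + t)))] with x hx hx2
    have hx0 : (0:ℝ) ≤ x := le_trans (le_max_left _ _) (le_trans (le_max_right _ _) hx2)
    have hxt : 2 * t ≤ x := le_trans (le_max_left _ _) hx2
    have hxu₂ : u₂ ≤ (x - t) / b := by
      rw [le_div_iff₀ hb0]
      have := le_trans (le_max_right _ _) (le_trans (le_max_right _ _) hx2)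
      linarith
    have hFle : rvTail μ X ((x - t) / b) ≤ Real.exp (-(l₂ * ((x - t) / b) ^ α)) := hu₂ _ hxu₂
    have hge : x / (2 * b) ≤ (x - t) / b := by
      rw [div_le_div_iff₀ (by linarith) hb0]
      nlinarith
    have hmono : (x / (2 * b)) ^ α ≤ ((x - t) / b) ^ α :=
      Real.rpow_le_rpow (by positivity) hge hα.le
    have hrw : l₂ * (x / (2 * b)) ^ α = A₁ * x ^ α := by
      rw [Real.div_rpow hx0 (by linarith : (0:ℝ) ≤ 2 * b), hA₁def, div_mul_eq_mul_div,
        mul_div_assoc]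
    have h2' : rvTail μ X ((x - t) / b) ≤ Real.exp (-(A₁ * x ^ α)) := by
      refine le_trans hFle (Real.exp_le_exp.mpr ?_)
      rw [← hrw]
      have := mul_le_mul_of_nonneg_left hmono hl₂.le
      linarith
    have h3' : Real.exp (-(A₁ * x ^ α))
        = Real.exp ((D - A₁) * x ^ α) * Real.exp (-(D * x ^ α)) := by
      rw [← Real.exp_add]; ring_nf
    calc rvTail μ X ((x - t) / b) ≤ Real.exp (-(A₁ * x ^ α)) := h2'
    _ = Real.exp ((D - A₁) * x ^ α) * Real.exp (-(D * x ^ α)) := h3'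
    _ ≤ ε / 8 * rvTail μ Y c * Real.exp (-(D * x ^ α)) :=
        mul_le_mul_of_nonneg_right hx.le (Real.exp_pos _).le
    _ = ε / 8 * (Real.exp (-(D * x ^ α)) * rvTail μ Y c) := by ring
  have hE2 : ∀ᶠ x in atTop, rvTail μ Y (x / x₀)
      ≤ ε / 8 * (Real.exp (-(D * x ^ α)) * rvTail μ Y c) := by
    filter_upwards [(hsmall A₂ hDA₂).eventually_lt_const
        (by positivity : (0:ℝ) < ε / 8 * rvTail μ Y c),
      eventually_ge_atTop (max 0 (x₀ * u₃))] with x hx hx2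
    have hx0 : (0:ℝ) ≤ x := le_trans (le_max_left _ _) hx2
    have hxu₃ : u₃ ≤ x / x₀ := by
      rw [le_div_iff₀ hx₀0]
      have := le_trans (le_max_right _ _) hx2
      linarith
    have hrw : l₃ * (x / x₀) ^ α = A₂ * x ^ α := by
      rw [Real.div_rpow hx0 hx₀0.le, hA₂def, div_mul_eq_mul_div, mul_div_assoc]
    have h3' : Real.exp (-(A₂ * x ^ α))
        = Real.exp ((D - A₂) * x ^ α) * Real.exp (-(D * x ^ α)) := by
      rw [← Real.exp_add]; ring_nf
    calc rvTail μ Y (x / x₀) ≤ Real.exp (-(l₃ * (x / x₀) ^ α)) := hu₃ _ hxu₃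
    _ = Real.exp (-(A₂ * x ^ α)) := by rw [hrw]
    _ = Real.exp ((D - A₂) * x ^ α) * Real.exp (-(D * x ^ α)) := h3'
    _ ≤ ε / 8 * rvTail μ Y c * Real.exp (-(D * x ^ α)) :=
        mul_le_mul_of_nonneg_right hx.le (Real.exp_pos _).le
    _ = ε / 8 * (Real.exp (-(D * x ^ α)) * rvTail μ Y c) := by ring
  -- main decomposition
  have hdecomp : ∀ᶠ x in atTop, rvTail μ (fun ω => X ω * Y ω) (x - t)
      ≤ rvTail μ X ((x - t) / b) + K * rvTail μ (fun ω => X ω * Y ω) x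
        + rvTail μ Y (x / x₀) := by
    filter_upwards [eventually_gt_atTop (max t 0)] with x hx
    have hxt : t < x := lt_of_le_of_lt (le_max_left _ _) hx
    have hx0 : (0:ℝ) < x := lt_of_le_of_lt (le_max_right _ _) hx
    set A := {ω | (x - t) / b < X ω} with hAdef
    set S := Ioc b (x / x₀) with hSdef
    set B := {ω | x - t < X ω * Y ω ∧ Y ω ∈ S} with hBdef
    set C := {ω | x / x₀ < Y ω} with hCdef
    have hcover : {ω | x - t < X ω * Y ω} ⊆ A ∪ (B ∪ C) := by
      intro ω hω
      simp only [mem_setOf_eq] at hω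
      by_cases hYb : Y ω ≤ b
      · left
        have hY0 : 0 < Y ω := by
          rcases lt_or_eq_of_le (hYnn ω) with h | h
          · exact h
          · exfalso; rw [← h, mul_zero] at hω; linarith
        show (x - t) / b < X ω
        have hd1 : (x - t) / b ≤ (x - t) / Y ω :=
          div_le_div_of_nonneg_left (by linarith) hY0 hYb
        have hd2 : (x - t) / Y ω < X ω := (div_lt_iff₀ hY0).mpr hω
        exact lt_of_le_of_lt hd1 hd2
      · by_cases hYx : Y ω ≤ x / x₀
        · exact Or.inr (Or.inl ⟨hω, ⟨not_le.mp hYb, hYx⟩⟩)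
        · exact Or.inr (Or.inr (not_le.mp hYx))
    have hSmeas : MeasurableSet S := measurableSet_Ioc
    have hSpos : ∀ y ∈ S, 0 < y := fun y hy => lt_trans hb0 hy.1
    have hBeq := prod_slice hXm hYm hindep (x - t) S hSmeas hSpos
    have hBeq2 := prod_slice hXm hYm hindep x S hSmeas hSpos
    have hptwise : ∀ y ∈ S, (μ.map X) (Ioi ((x - t) / y))
        ≤ ENNReal.ofReal K * (μ.map X) (Ioi (x / y)) := by
      intro y hy
      have hy0 : 0 < y := hSpos y hy
      have hstep1 : x / y - s ≤ (x - t) / y := by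
        rw [sub_div]
        have : t / y ≤ t / b := div_le_div_of_nonneg_left ht.le hb0 hy.1.le
        rw [hsdef]
        linarith
      have hx₀y : x₀ ≤ x / y := by
        rw [le_div_iff₀ hy0]
        have h2' : y ≤ x / x₀ := hy.2
        rw [le_div_iff₀ hx₀0] at h2'
        linarith
      have hreal : rvTail μ X (x / y - s) ≤ K * rvTail μ X (x / y) := hK _ hx₀y
      rw [rvTail_eq_map hXm, rvTail_eq_map hXm] at hreal
      calc (μ.map X) (Ioi ((x - t) / y)) ≤ (μ.map X) (Ioi (x / y - s)) :=
          measure_mono (fun z hz => lt_of_le_of_lt hstep1 hz)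
      _ ≤ ENNReal.ofReal K * (μ.map X) (Ioi (x / y)) :=
          ennreal_le_ofReal_mul (measure_ne_top _ _) (measure_ne_top _ _) hKnn hreal
    have hBle : μ B ≤ ENNReal.ofReal K * μ {ω | x < X ω * Y ω} := by
      rw [hBdef, hBeq]
      calc ∫⁻ y in S, (μ.map X) (Ioi ((x - t) / y)) ∂(μ.map Y)
          ≤ ∫⁻ y in S, ENNReal.ofReal K * (μ.map X) (Ioi (x / y)) ∂(μ.map Y) := by
            apply lintegral_mono_ae
            rw [ae_restrict_iff' hSmeas]
            exact Eventually.of_forall hptwise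
      _ = ENNReal.ofReal K * ∫⁻ y in S, (μ.map X) (Ioi (x / y)) ∂(μ.map Y) :=
            lintegral_const_mul' _ _ ENNReal.ofReal_ne_top
      _ = ENNReal.ofReal K * μ {ω | x < X ω * Y ω ∧ Y ω ∈ S} := by rw [hBeq2]
      _ ≤ ENNReal.ofReal K * μ {ω | x < X ω * Y ω} :=
            mul_le_mul_right (measure_mono (fun ω hω => hω.1)) _
    have htotal : μ {ω | x - t < X ω * Y ω}
        ≤ μ A + (ENNReal.ofReal K * μ {ω | x < X ω * Y ω} + μ C) := by
      calc μ {ω | x - t < X ω * Y ω} ≤ μ (A ∪ (B ∪ C)) := measure_mono hcover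
      _ ≤ μ A + μ (B ∪ C) := measure_union_le _ _
      _ ≤ μ A + (μ B + μ C) := add_le_add_right (measure_union_le _ _) _
      _ ≤ _ := add_le_add_right (add_le_add_left hBle _) _
    have hKmul_ne : ENNReal.ofReal K * μ {ω | x < X ω * Y ω} ≠ ⊤ :=
      ENNReal.mul_ne_top ENNReal.ofReal_ne_top (measure_ne_top μ _)
    have hRHSne : μ A + (ENNReal.ofReal K * μ {ω | x < X ω * Y ω} + μ C) ≠ ⊤ :=
      ENNReal.add_ne_top.mpr ⟨measure_ne_top μ A,
        ENNReal.add_ne_top.mpr ⟨hKmul_ne, measure_ne_top μ C⟩⟩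
    have hmain := ENNReal.toReal_mono hRHSne htotal
    rw [ENNReal.toReal_add (measure_ne_top μ A)
        (ENNReal.add_ne_top.mpr ⟨hKmul_ne, measure_ne_top μ C⟩),
      ENNReal.toReal_add hKmul_ne (measure_ne_top μ C),
      ENNReal.toReal_mul, ENNReal.toReal_ofReal hKnn] at hmain
    simp only [rvTail]
    calc (μ {ω | x - t < X ω * Y ω}).toReal
        ≤ (μ A).toReal + (K * (μ {ω | x < X ω * Y ω}).toReal + (μ C).toReal) := hmain
    _ = (μ A).toReal + K * (μ {ω | x < X ω * Y ω}).toReal + (μ C).toReal := by ring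
  -- final assembly
  have hfinal : ∀ᶠ x in atTop,
      dist (rvTail μ (fun ω => X ω * Y ω) (x - t) / rvTail μ (fun ω => X ω * Y ω) x) 1 < ε₀ := by
    filter_upwards [hdecomp, hE1, hE2, hlow] with x hd hb1' hb2' hl
    set Hxt := rvTail μ (fun ω => X ω * Y ω) (x - t) with hHxtdef
    set Hx := rvTail μ (fun ω => X ω * Y ω) x with hHxdef
    have hHx : 0 < Hx := hHpos x
    have hHle : Hx ≤ Hxt := rvTail_anti μ _ (by linarith : x - t ≤ x)
    have hLle : Real.exp (-(D * x ^ α)) * rvTail μ Y c ≤ Hx := hl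
    have hup : Hxt ≤ (1 + 3 * ε / 4) * Hx := by
      have hb1'' : rvTail μ X ((x - t) / b) ≤ ε / 8 * Hx := by nlinarith
      have hb2'' : rvTail μ Y (x / x₀) ≤ ε / 8 * Hx := by nlinarith
      nlinarith
    have hratio1 : 1 ≤ Hxt / Hx := (one_le_div hHx).mpr hHle
    have hratio2 : Hxt / Hx ≤ 1 + 3 * ε / 4 := (div_le_iff₀ hHx).mpr (by linarith)
    rw [Real.dist_eq, abs_of_nonneg (by linarith)]
    calc Hxt / Hx - 1 ≤ 3 * ε / 4 := by linarith
    _ < ε := by linarith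
    _ ≤ ε₀ := hεε
  exact hfinal
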